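/- Correctness of the Porthos 3PC convolution protocol (Algorithm 1): Let R be a commutative ring, 1 ≤ f ≤ m, q = m − f + 1. Let X₀, X₁, A₀, A₁ be m×m matrices, Y₀, Y₁, B₀, B₁ be f×f matrices, and C₀, C₁, U₀, U₁ be q²×1 column vectors over R such that, writing X = X₀ + X₁, Y = Y₀ + Y₁, A = A₀ + A₁, B = B₀ + B₁, we have C₀ + C₁ = ReshapeInput(A) · ReshapeFilter(B) and U₀ + U₁ = 0. Let E = X − A, F = Y − B, E' = ReshapeInput(E), F' = ReshapeFilter(F), X'ⱼ = ReshapeInput(Xⱼ), Y'ⱼ = ReshapeFilter(Yⱼ), and for j ∈ {0,1} let Z'ⱼ = −j·(E'·F') + X'ⱼ·F' + E'·Y'ⱼ + Cⱼ + Uⱼ and Zⱼ = ReshapeOutput(Z'ⱼ). Then Z₀ + Z₁ = Conv2d_{m,f}(X, Y), i.e., the parties' outputs form additive shares of the convolution of X with Y. -/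
import Mathlib


/-- `Conv2d_{m,f}(X,Y)`: the `q×q` matrix with `(i,j)` entry
`Σ_{k<f} Σ_{l<f} X[i+k][j+l] · Y[k][l]` (stride 1, no padding),
where `q + f = m + 1` (i.e. `q = m - f + 1`). -/
def conv2d {R : Type*} [CommRing R] {m f q : ℕ} (h : q + f = m + 1)
    (X : Matrix (Fin m) (Fin m) R) (Y : Matrix (Fin f) (Fin f) R) :
    Matrix (Fin q) (Fin q) R :=
  Matrix.of fun i j => ∑ k : Fin f, ∑ l : Fin f,
    X ⟨i.val + k.val, by have := i.isLt; have := k.isLt; omega⟩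
      ⟨j.val + l.val, by have := j.isLt; have := l.isLt; omega⟩ * Y k l

/-- `ReshapeInput(X)`: the `q²×f²` matrix whose `(i·q+j, k·f+l)` entry is
`X[i+k][j+l]`. -/
def reshapeInput {R : Type*} {m f q : ℕ} (h : q + f = m + 1)
    (X : Matrix (Fin m) (Fin m) R) : Matrix (Fin (q * q)) (Fin (f * f)) R :=
  Matrix.of fun rc cc =>
    X ⟨rc.val / q + cc.val / f, by
        have hr := rc.isLt; have hc := cc.isLt
        have hq0 : 0 < q := Nat.pos_of_ne_zero (fun h0 => by
          have hqq : 0 < q * q := lt_of_le_of_lt (Nat.zero_le _) hr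
          rw [h0] at hqq; omega)
        have hf0 : 0 < f := Nat.pos_of_ne_zero (fun h0 => by
          have hff : 0 < f * f := lt_of_le_of_lt (Nat.zero_le _) hc
          rw [h0] at hff; omega)
        have h1 : rc.val / q < q := (Nat.div_lt_iff_lt_mul hq0).mpr hr
        have h2 : cc.val / f < f := (Nat.div_lt_iff_lt_mul hf0).mpr hc
        omega⟩
      ⟨rc.val % q + cc.val % f, by
        have hr := rc.isLt; have hc := cc.isLt
        have hq0 : 0 < q := Nat.pos_of_ne_zero (fun h0 => by
          have hqq : 0 < q * q := lt_of_le_of_lt (Nat.zero_le _) hr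
          rw [h0] at hqq; omega)
        have hf0 : 0 < f := Nat.pos_of_ne_zero (fun h0 => by
          have hff : 0 < f * f := lt_of_le_of_lt (Nat.zero_le _) hc
          rw [h0] at hff; omega)
        have h1 : rc.val % q < q := Nat.mod_lt _ hq0
        have h2 : cc.val % f < f := Nat.mod_lt _ hf0
        omega⟩

/-- `ReshapeFilter(Y)`: the `f²×1` column vector whose `(k·f+l)`-th entry is
`Y[k][l]`. -/
def reshapeFilter {R : Type*} {f : ℕ}
    (Y : Matrix (Fin f) (Fin f) R) : Matrix (Fin (f * f)) (Fin 1) R :=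
  Matrix.of fun c _ =>
    Y ⟨c.val / f, by
        have hc := c.isLt
        have hf0 : 0 < f := Nat.pos_of_ne_zero (fun h0 => by
          have hff : 0 < f * f := lt_of_le_of_lt (Nat.zero_le _) hc
          rw [h0] at hff; omega)
        exact (Nat.div_lt_iff_lt_mul hf0).mpr hc⟩
      ⟨c.val % f, by
        have hc := c.isLt
        have hf0 : 0 < f := Nat.pos_of_ne_zero (fun h0 => by
          have hff : 0 < f * f := lt_of_le_of_lt (Nat.zero_le _) hc
          rw [h0] at hff; omega)
        exact Nat.mod_lt _ hf0⟩

/-- `ReshapeOutput(Z')`: the `q×q` matrix whose `(i,j)` entry is the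
`(i·q+j)`-th entry of the `q²×1` column vector `Z'`. -/
def reshapeOutput {R : Type*} {q : ℕ}
    (Z : Matrix (Fin (q * q)) (Fin 1) R) : Matrix (Fin q) (Fin q) R :=
  Matrix.of fun i j =>
    Z ⟨i.val * q + j.val, by
        have hi := i.isLt; have hj := j.isLt
        calc i.val * q + j.val < i.val * q + q := by omega
          _ = (i.val + 1) * q := by ring
          _ ≤ q * q := Nat.mul_le_mul_right q hi
      ⟩ 0

lemma reshapeInput_add {R : Type*} [CommRing R] {m f q : ℕ} (h : q + f = m + 1)
    (X X' : Matrix (Fin m) (Fin m) R) :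
    reshapeInput h (X + X') = reshapeInput h X + reshapeInput h X' := by
  ext rc cc; simp [reshapeInput]

lemma reshapeFilter_add {R : Type*} [CommRing R] {f : ℕ}
    (Y Y' : Matrix (Fin f) (Fin f) R) :
    reshapeFilter (Y + Y') = reshapeFilter Y + reshapeFilter Y' := by
  ext c j; simp [reshapeFilter]

lemma reshapeInput_sub {R : Type*} [CommRing R] {m f q : ℕ} (h : q + f = m + 1)
    (X X' : Matrix (Fin m) (Fin m) R) :
    reshapeInput h (X - X') = reshapeInput h X - reshapeInput h X' := by
  ext rc cc; simp [reshapeInput]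

lemma reshapeFilter_sub {R : Type*} [CommRing R] {f : ℕ}
    (Y Y' : Matrix (Fin f) (Fin f) R) :
    reshapeFilter (Y - Y') = reshapeFilter Y - reshapeFilter Y' := by
  ext c j; simp [reshapeFilter]

lemma reshapeOutput_add {R : Type*} [CommRing R] {q : ℕ}
    (Z Z' : Matrix (Fin (q * q)) (Fin 1) R) :
    reshapeOutput (Z + Z') = reshapeOutput Z + reshapeOutput Z' := by
  ext i j; simp [reshapeOutput]

lemma reshapeOutput_key {R : Type*} [CommRing R] {m f q : ℕ} (h : q + f = m + 1)
    (hf0 : 0 < f)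
    (X : Matrix (Fin m) (Fin m) R) (Y : Matrix (Fin f) (Fin f) R) :
    reshapeOutput (reshapeInput h X * reshapeFilter Y) = conv2d h X Y := by
  ext i j
  simp only [reshapeOutput, conv2d, Matrix.mul_apply, Matrix.of_apply]
  rw [← (finProdFinEquiv (m := f) (n := f)).sum_comp, Fintype.sum_prod_type]
  refine Finset.sum_congr rfl fun k _ => Finset.sum_congr rfl fun l _ => ?_
  simp only [reshapeInput, reshapeFilter, finProdFinEquiv, Matrix.of_apply,
    Equiv.coe_fn_mk]
  have hq0 : 0 < q := i.pos
  have h1 : (i.val * q + j.val) / q = i.val := by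
    rw [mul_comm, Nat.mul_add_div hq0, Nat.div_eq_of_lt j.isLt, Nat.add_zero]
  have h2 : (i.val * q + j.val) % q = j.val := by
    rw [mul_comm, Nat.mul_add_mod]; exact Nat.mod_eq_of_lt j.isLt
  have h3 : (l.val + f * k.val) / f = k.val := by
    rw [Nat.add_mul_div_left _ _ hf0, Nat.div_eq_of_lt l.isLt, Nat.zero_add]
  have h4 : (l.val + f * k.val) % f = l.val := by
    rw [Nat.add_mul_mod_self_left]; exact Nat.mod_eq_of_lt l.isLt
  congr 2 <;> simp [h1, h2, h3, h4]

/-- Correctness of the Porthos 3PC convolution protocol (Algorithm 1): the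
parties' outputs `Z₀, Z₁` form additive shares of `Conv2d_{m,f}(X, Y)`. -/
theorem porthos_conv2d_correct {R : Type*} [CommRing R] {m f q : ℕ}
    (hf : 1 ≤ f) (hfm : f ≤ m) (hq : q = m - f + 1)
    (X₀ X₁ A₀ A₁ : Matrix (Fin m) (Fin m) R)
    (Y₀ Y₁ B₀ B₁ : Matrix (Fin f) (Fin f) R)
    (C₀ C₁ U₀ U₁ : Matrix (Fin (q * q)) (Fin 1) R)
    (hC : C₀ + C₁ =
      reshapeInput (show q + f = m + 1 by omega) (A₀ + A₁) *
        reshapeFilter (B₀ + B₁))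
    (hU : U₀ + U₁ = 0)
    (E : Matrix (Fin m) (Fin m) R) (F : Matrix (Fin f) (Fin f) R)
    (hE : E = (X₀ + X₁) - (A₀ + A₁)) (hF : F = (Y₀ + Y₁) - (B₀ + B₁))
    (E' : Matrix (Fin (q * q)) (Fin (f * f)) R)
    (F' : Matrix (Fin (f * f)) (Fin 1) R)
    (hE' : E' = reshapeInput (show q + f = m + 1 by omega) E)
    (hF' : F' = reshapeFilter F)
    (Z'₀ Z'₁ : Matrix (Fin (q * q)) (Fin 1) R)
    (hZ0 : Z'₀ = reshapeInput (show q + f = m + 1 by omega) X₀ * F' +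
      E' * reshapeFilter Y₀ + C₀ + U₀)
    (hZ1 : Z'₁ = -(E' * F') +
      reshapeInput (show q + f = m + 1 by omega) X₁ * F' +
      E' * reshapeFilter Y₁ + C₁ + U₁) :
    reshapeOutput Z'₀ + reshapeOutput Z'₁ =
      conv2d (show q + f = m + 1 by omega) (X₀ + X₁) (Y₀ + Y₁) := by
  have h : q + f = m + 1 := by omega
  have hE'' : E' = (reshapeInput h X₀ + reshapeInput h X₁) -
      (reshapeInput h A₀ + reshapeInput h A₁) := by
    rw [hE', hE, reshapeInput_sub, reshapeInput_add, reshapeInput_add]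
  have hF'' : F' = (reshapeFilter Y₀ + reshapeFilter Y₁) -
      (reshapeFilter B₀ + reshapeFilter B₁) := by
    rw [hF', hF, reshapeFilter_sub, reshapeFilter_add, reshapeFilter_add]
  have hC' : C₀ + C₁ = (reshapeInput h A₀ + reshapeInput h A₁) *
      (reshapeFilter B₀ + reshapeFilter B₁) := by
    rw [hC, reshapeInput_add, reshapeFilter_add]
  have hsum : Z'₀ + Z'₁ = reshapeInput h (X₀ + X₁) * reshapeFilter (Y₀ + Y₁) := by
    have hZ0' : Z'₀ = reshapeInput h X₀ * F' + E' * reshapeFilter Y₀ + C₀ + U₀ := hZ0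
    have hZ1' : Z'₁ = -(E' * F') + reshapeInput h X₁ * F' +
        E' * reshapeFilter Y₁ + C₁ + U₁ := hZ1
    have h0 : Z'₀ + Z'₁ = (reshapeInput h X₀ + reshapeInput h X₁) * F' +
        E' * (reshapeFilter Y₀ + reshapeFilter Y₁) - E' * F' +
        (C₀ + C₁) + (U₀ + U₁) := by
      rw [hZ0', hZ1', Matrix.add_mul, Matrix.mul_add]; abel
    rw [h0, hC', hU, hE'', hF'', reshapeInput_add, reshapeFilter_add]
    simp only [Matrix.add_mul, Matrix.mul_add, Matrix.sub_mul, Matrix.mul_sub]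
    abel
  rw [← reshapeOutput_add, hsum, reshapeOutput_key h hf]
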